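/- arXiv:2201.07974 — 9 statements merged into one kernel-verified Lean document; each statement's English description precedes it below -/
import Mathlib

section
/- Let n ≥ 2 and 1 ≤ m ≤ n−1. For every regular n-gon with center c, circumradius R > 0 and orientation θ, and every point M in its plane with L = |M − c|, the cyclic average satisfies S_n^{(2m)} = (R² + L²)^m + ∑_{k=1}^{⌊m/2⌋} C(m,2k)·C(2k,k)·R^{2k}·L^{2k}·(R² + L²)^{m−2k}. -/
open Complex Real Finset

open scoped ComplexConjugate

/-!
Write `w = M - c`, `ζ = exp (2πi/n)` and `v = exp (iθ)`, so that the vertices are `c + R v ζ^k`.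
Since `|v ζ^k| = 1`, the squared distance is the Laurent polynomial
`d_k² = (R² + L²) + a ζ^k + b ζ^{-k}` with `a = -R w̄ v`, `b = -R w v⁻¹` and `a b = R² L²`.
Expanding its `m`-th power by the binomial theorem twice leaves monomials `ζ^{k(2i - j)}` with
`|2i - j| ≤ m < n`, and averaging over `k` kills all of them except the constant ones `j = 2i`.
-/

theorem Finset.sum_range_succ_ite_even {M : Type*} [AddCommMonoid M] (m : ℕ) (f : ℕ → M) :
    ∑ j ∈ range (m + 1), (if Even j then f j else 0) = ∑ i ∈ range (m / 2 + 1), f (2 * i) := by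
  rw [← sum_filter]
  symm
  apply sum_nbij' (2 * ·) (· / 2) <;> simp [Nat.even_iff] <;> omega

theorem add_mul_inv_pow {K : Type*} [Field K] (a b : K) {z : K} (hz : z ≠ 0) (j : ℕ) :
    (a * z + b * z⁻¹) ^ j
      = ∑ i ∈ range (j + 1), a ^ i * b ^ (j - i) * j.choose i * z ^ (2 * i - j : ℤ) := by
  rw [add_pow]
  refine sum_congr rfl fun i hi => ?_
  have hij : (2 * i - j : ℤ) = i - (j - i : ℕ) := by
    have := mem_range.1 hi; push_cast [Nat.le_of_lt_succ this]; ring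
  rw [hij, zpow_sub₀ hz, zpow_natCast, zpow_natCast, mul_pow, mul_pow, inv_pow]
  ring

namespace IsPrimitiveRoot

variable {K : Type*} [Field K] {ζ : K} {n : ℕ}

theorem sum_pow_zpow (hζ : IsPrimitiveRoot ζ n) {d : ℤ} (hd : d.natAbs < n) :
    ∑ k ∈ range n, (ζ ^ k) ^ d = if d = 0 then (n : K) else 0 := by
  split_ifs with h0
  · simp [h0]
  have hne : ζ ^ d ≠ 1 := by
    rw [Ne, hζ.zpow_eq_one_iff_dvd]
    intro hdvd
    have := Int.natAbs_le_of_dvd_ne_zero hdvd h0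
    omega
  have hpow : (ζ ^ d) ^ n = 1 := by
    rw [← zpow_natCast, ← zpow_mul, mul_comm, zpow_mul, hζ.zpow_eq_one, one_zpow]
  simp_rw [← zpow_natCast, ← zpow_mul, mul_comm _ d, zpow_mul, zpow_natCast]
  exact eq_zero_of_ne_zero_of_mul_left_eq_zero (sub_ne_zero_of_ne hne.symm)
    (by rw [mul_neg_geom_sum, hpow, sub_self])

theorem sum_mul_add_mul_inv_pow (hζ : IsPrimitiveRoot ζ n) (a b : K) {j : ℕ} (hj : j < n) :
    ∑ k ∈ range n, (a * ζ ^ k + b * (ζ ^ k)⁻¹) ^ j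
      = if Even j then n * j.choose (j / 2) * (a * b) ^ (j / 2) else 0 := by
  have hζ0 : ζ ≠ 0 := hζ.ne_zero (by omega)
  simp_rw [add_mul_inv_pow a b (pow_ne_zero _ hζ0)]
  rw [sum_comm]
  simp_rw [← mul_sum]
  rw [sum_congr rfl fun i hi => by rw [hζ.sum_pow_zpow (by grind)]]
  simp_rw [mul_ite, mul_zero]
  split_ifs with hj
  · obtain ⟨r, rfl⟩ := hj
    rw [sum_eq_single r (fun i _ hi => if_neg (by omega)) (by simp), if_pos (by push_cast; ring),
      show r + r - r = r by omega, show (r + r) / 2 = r by omega]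
    ring
  · exact sum_eq_zero fun i _ => if_neg (by grind)

theorem sum_add_mul_add_mul_inv_pow (hζ : IsPrimitiveRoot ζ n) (A a b : K) {m : ℕ} (hm : m < n) :
    ∑ k ∈ range n, (A + (a * ζ ^ k + b * (ζ ^ k)⁻¹)) ^ m
      = n * ∑ i ∈ range (m / 2 + 1),
          m.choose (2 * i) * (2 * i).choose i * (a * b) ^ i * A ^ (m - 2 * i) := by
  simp_rw [add_comm A, add_pow _ A]
  rw [sum_comm]
  simp_rw [← sum_mul]
  rw [sum_congr rfl fun j hj => by rw [hζ.sum_mul_add_mul_inv_pow a b (by grind)]]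
  simp_rw [ite_mul, zero_mul]
  rw [sum_range_succ_ite_even, mul_sum]
  refine sum_congr rfl fun i _ => ?_
  rw [Nat.mul_div_cancel_left i two_pos]
  ring

end IsPrimitiveRoot

theorem Complex.ofReal_sq_norm_sub_mul {u : ℂ} (hu : ‖u‖ = 1) (w : ℂ) (r : ℝ) :
    ((‖w - r * u‖ ^ 2 : ℝ) : ℂ) = (r ^ 2 + ‖w‖ ^ 2 : ℝ) - (r * conj w * u + r * w * u⁻¹) := by
  have hu' : u * conj u = 1 := by rw [mul_conj', hu]; simp
  push_cast
  rw [← mul_conj', ← mul_conj', inv_eq_conj hu]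
  simp only [map_sub, map_mul, conj_ofReal]
  linear_combination (r : ℂ) ^ 2 * hu'

theorem cyclic_average_formula_general (n m : ℕ) (hn : 2 ≤ n) (hm2 : m ≤ n - 1)
    (c M : ℂ) (R θ : ℝ) (L : ℝ) (hL : L = ‖M - c‖) :
    (1 / n : ℝ) * ∑ k ∈ Finset.range n,
        (‖M - (c + R * Complex.exp (Complex.I * ((2 * π * k / n + θ : ℝ) : ℂ)))‖) ^ (2 * m)
      = (R ^ 2 + L ^ 2) ^ m
        + ∑ k ∈ Finset.Icc 1 (m / 2),
            (m.choose (2 * k) : ℝ) * ((2 * k).choose k : ℝ)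
              * R ^ (2 * k) * L ^ (2 * k) * (R ^ 2 + L ^ 2) ^ (m - 2 * k) := by
  set ζ := exp (2 * π * I / n)
  have hζ : IsPrimitiveRoot ζ n := isPrimitiveRoot_exp n (by omega)
  set v := exp (I * θ)
  have hvertex (k : ℕ) : exp (I * ((2 * π * k / n + θ : ℝ) : ℂ)) = v * ζ ^ k := by
    rw [← Complex.exp_nat_mul, ← Complex.exp_add]; congr 1; push_cast; ring
  have hdist (k : ℕ) :
      ((‖M - (c + R * exp (I * ((2 * π * k / n + θ : ℝ) : ℂ)))‖ ^ (2 * m) : ℝ) : ℂ)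
        = (((R ^ 2 + L ^ 2 : ℝ) : ℂ)
          + (-(R * conj (M - c) * v) * ζ ^ k + -(R * (M - c) * v⁻¹) * (ζ ^ k)⁻¹)) ^ m := by
    rw [pow_mul, ofReal_pow, sub_add_eq_sub_sub,
      ofReal_sq_norm_sub_mul (by rw [mul_comm]; exact norm_exp_ofReal_mul_I _), hvertex, mul_inv, hL]
    ring
  have hab : -(R * conj (M - c) * v) * -(R * (M - c) * v⁻¹) = ((R ^ 2 * L ^ 2 : ℝ) : ℂ) := by
    have hv : v * v⁻¹ = 1 := mul_inv_cancel₀ (exp_ne_zero _)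
    rw [hL]; push_cast
    rw [← mul_conj']
    linear_combination (R ^ 2 * conj (M - c) * (M - c) : ℂ) * hv
  have hrhs : (R ^ 2 + L ^ 2) ^ m + ∑ k ∈ Icc 1 (m / 2), (m.choose (2 * k) : ℝ)
      * ((2 * k).choose k : ℝ) * R ^ (2 * k) * L ^ (2 * k) * (R ^ 2 + L ^ 2) ^ (m - 2 * k)
      = ∑ i ∈ range (m / 2 + 1), (m.choose (2 * i) : ℝ) * ((2 * i).choose i : ℝ)
          * (R ^ 2 * L ^ 2) ^ i * (R ^ 2 + L ^ 2) ^ (m - 2 * i) := by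
    rw [range_eq_Ico, sum_eq_sum_Ico_succ_bot (by omega), Ico_add_one_right_eq_Icc]
    simp [mul_pow, pow_mul, mul_assoc]
  apply ofReal_injective
  rw [hrhs, ofReal_mul, ofReal_sum, sum_congr rfl fun k _ => hdist k,
    hζ.sum_add_mul_add_mul_inv_pow _ _ _ (by omega), hab]
  push_cast
  rw [one_div, inv_mul_cancel_left₀ (Nat.cast_ne_zero.2 (by omega))]

theorem cyclic_average_formula (n m : ℕ) (hn : 2 ≤ n) (hm1 : 1 ≤ m) (hm2 : m ≤ n - 1)
    (c M : ℂ) (R θ : ℝ) (hR : 0 < R) (L : ℝ) (hL : L = ‖M - c‖) :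
    (1 / n : ℝ) * ∑ k ∈ Finset.range n,
        (‖M - (c + R * Complex.exp (Complex.I * ((2 * π * k / n + θ : ℝ) : ℂ)))‖) ^ (2 * m)
      = (R ^ 2 + L ^ 2) ^ m
        + ∑ k ∈ Finset.Icc 1 (m / 2),
            (m.choose (2 * k) : ℝ) * ((2 * k).choose k : ℝ)
              * R ^ (2 * k) * L ^ (2 * k) * (R ^ 2 + L ^ 2) ^ (m - 2 * k) :=
  cyclic_average_formula_general n m hn hm2 c M R θ L hL
end

section
/- Let n ≥ 3. For every regular n-gon with center c, circumradius R > 0 and orientation θ, and every point M in its plane with L = |M − c|, one has S_n^{(4)} = (R² + L²)² + 2R²L², i.e. (1/n)·∑_{k=0}^{n−1} |M − v_k|⁴ = (R² + L²)² + 2R²L². -/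
open Complex Real Finset

open ComplexConjugate

/-!
Write `M - v_k = z - w ζ^k` with `z = M - c`, `w = R e^{iθ}` and `ζ = e^{2πi/n}`. Expanding,
`|z - u|⁴ = (|z|² + |u|²)² + 2|z|²|u|² - 4(|z|² + |u|²) Re(z̄u) + 2 Re((z̄u)²)`, and for `u = w ζ^k`
the last two terms are real parts of `a ζ^k` and `b ζ^{2k}`. Since `ζ` and `ζ²` are nontrivial
`n`-th roots of unity for `n ≥ 3`, these average to zero over `k`, leaving the constant term.
-/

lemma IsPrimitiveRoot.sum_range_pow_pow_eq_zero {K : Type*} [Field K] {ζ : K} {n j : ℕ}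
    (hζ : IsPrimitiveRoot ζ n) (hj0 : j ≠ 0) (hjn : j < n) :
    ∑ k ∈ range n, (ζ ^ j) ^ k = 0 := by
  rw [geom_sum_eq (hζ.pow_ne_one_of_pos_of_lt hj0 hjn), ← pow_mul, mul_comm, pow_mul,
    hζ.pow_eq_one, one_pow, sub_self, zero_div]

lemma IsPrimitiveRoot.sum_range_re_mul_pow_pow_eq_zero {ζ : ℂ} {n j : ℕ}
    (hζ : IsPrimitiveRoot ζ n) (hj0 : j ≠ 0) (hjn : j < n) (a : ℂ) :
    ∑ k ∈ range n, (a * (ζ ^ j) ^ k).re = 0 := by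
  rw [← re_sum, ← mul_sum, hζ.sum_range_pow_pow_eq_zero hj0 hjn, mul_zero, zero_re]

namespace Complex

lemma re_sq_eq (x : ℂ) : x.re ^ 2 = (‖x‖ ^ 2 + (x ^ 2).re) / 2 := by
  rw [Complex.sq_norm, normSq_apply, sq x, mul_re]
  ring

lemma norm_sub_pow_four (z u : ℂ) :
    ‖z - u‖ ^ 4 = (‖z‖ ^ 2 + ‖u‖ ^ 2) ^ 2 + 2 * ‖z‖ ^ 2 * ‖u‖ ^ 2
      - 4 * (‖z‖ ^ 2 + ‖u‖ ^ 2) * (conj z * u).re + 2 * ((conj z * u) ^ 2).re := by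
  have hsq : ‖z - u‖ ^ 2 = ‖z‖ ^ 2 + ‖u‖ ^ 2 - 2 * (conj z * u).re := by
    rw [Complex.sq_norm, Complex.sq_norm, Complex.sq_norm, normSq_sub,
      ← conj_re, map_mul, conj_conj, mul_comm]
  have hnorm : ‖conj z * u‖ = ‖z‖ * ‖u‖ := by rw [norm_mul, RCLike.norm_conj]
  rw [show ‖z - u‖ ^ 4 = (‖z - u‖ ^ 2) ^ 2 by ring, hsq]
  linear_combination 4 * re_sq_eq (conj z * u) + 2 * (‖z‖ * ‖u‖ + ‖conj z * u‖) * hnorm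

end Complex

theorem IsPrimitiveRoot.sum_range_norm_sub_mul_pow_pow_four {ζ : ℂ} {n : ℕ}
    (hζ : IsPrimitiveRoot ζ n) (hn : 3 ≤ n) (z w : ℂ) :
    ∑ k ∈ range n, ‖z - w * ζ ^ k‖ ^ 4
      = n * ((‖z‖ ^ 2 + ‖w‖ ^ 2) ^ 2 + 2 * ‖z‖ ^ 2 * ‖w‖ ^ 2) := by
  have hζ_norm : ‖ζ‖ = 1 := hζ.norm'_eq_one (by omega)
  have hterm : ∀ k, ‖z - w * ζ ^ k‖ ^ 4
      = (‖z‖ ^ 2 + ‖w‖ ^ 2) ^ 2 + 2 * ‖z‖ ^ 2 * ‖w‖ ^ 2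
        - 4 * (‖z‖ ^ 2 + ‖w‖ ^ 2) * (conj z * w * (ζ ^ 1) ^ k).re
        + 2 * ((conj z * w) ^ 2 * (ζ ^ 2) ^ k).re := by
    intro k
    rw [norm_sub_pow_four, norm_mul, norm_pow, hζ_norm, one_pow, mul_one,
      show conj z * (w * ζ ^ k) = conj z * w * (ζ ^ 1) ^ k by ring,
      show (conj z * w * (ζ ^ 1) ^ k) ^ 2 = (conj z * w) ^ 2 * (ζ ^ 2) ^ k by ring]
  simp only [hterm, sum_add_distrib, sum_sub_distrib, ← mul_sum, sum_const, card_range,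
    nsmul_eq_mul, hζ.sum_range_re_mul_pow_pow_eq_zero one_ne_zero (by omega : 1 < n),
    hζ.sum_range_re_mul_pow_pow_eq_zero two_ne_zero (by omega : 2 < n)]
  ring

theorem cyclic_average_S4_general (n : ℕ) (hn : 3 ≤ n)
    (c M : ℂ) (R θ : ℝ) (L : ℝ) (hL : L = ‖M - c‖) :
    (1 / n : ℝ) * ∑ k ∈ Finset.range n,
        (‖M - (c + R * Complex.exp (Complex.I * ((2 * π * k / n + θ : ℝ) : ℂ)))‖) ^ 4
      = (R ^ 2 + L ^ 2) ^ 2 + 2 * R ^ 2 * L ^ 2 := by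
  set ζ : ℂ := exp (2 * π * I / n)
  set w : ℂ := R * exp (θ * I)
  have hvertex : ∀ k : ℕ, M - (c + R * exp (I * ((2 * π * k / n + θ : ℝ) : ℂ)))
      = (M - c) - w * ζ ^ k := by
    intro k
    rw [show I * ((2 * π * k / n + θ : ℝ) : ℂ) = θ * I + k * (2 * π * I / n) by push_cast; ring,
      Complex.exp_add, Complex.exp_nat_mul]
    ring
  have hw : ‖w‖ ^ 2 = R ^ 2 := by
    rw [norm_mul, norm_exp_ofReal_mul_I, norm_real, Real.norm_eq_abs, mul_one, sq_abs]
  simp only [hvertex]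
  rw [(isPrimitiveRoot_exp n (by omega)).sum_range_norm_sub_mul_pow_pow_four hn, hw, ← hL]
  field_simp
  ring

theorem cyclic_average_S4 (n : ℕ) (hn : 3 ≤ n)
    (c M : ℂ) (R θ : ℝ) (hR : 0 < R) (L : ℝ) (hL : L = ‖M - c‖) :
    (1 / n : ℝ) * ∑ k ∈ Finset.range n,
        (‖M - (c + R * Complex.exp (Complex.I * ((2 * π * k / n + θ : ℝ) : ℂ)))‖) ^ 4
      = (R ^ 2 + L ^ 2) ^ 2 + 2 * R ^ 2 * L ^ 2 :=
  cyclic_average_S4_general n hn c M R θ L hL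
end

section
/- Let n ≥ 3. For every regular n-gon with center c, circumradius R > 0 and orientation θ, and every point M in its plane with L = |M − c|, one has S_n^{(4)} − (S_n^{(2)})² = 2R²L² ≥ 0; in particular S_n^{(4)} ≥ (S_n^{(2)})², with equality if and only if M = c. -/
/-!
Write the vertices as `c + a ζ ^ k` with `ζ = exp (2πi/n)` and `‖a‖ = R`, and put `w = M - c`.
Then `d_k² = L² + R² - 2 x_k` with `x_k = Re (conj w · a ζ ^ k)`. Since `ζ` and `ζ²` are
nontrivial `n`-th roots of unity (this is where `n ≥ 3` enters), the power sums of `ζ ^ k` and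
`ζ ^ (2k)` vanish, so `∑ x_k = 0` and, by `x² = (‖x‖² + Re x²) / 2`, `∑ x_k² = n R² L² / 2`.
Hence `S⁽²⁾ = L² + R²`, and expanding `d_k⁴ = (L² + R² - 2 x_k)²` gives
`S⁽⁴⁾ = (L² + R²)² + 2 R² L²`.
-/

open Complex Real Finset ComplexConjugate

theorem IsPrimitiveRoot.sum_pow_pow_eq_zero {K : Type*} [Field K] {ζ : K} {n j : ℕ}
    (hζ : IsPrimitiveRoot ζ n) (hj : ¬ n ∣ j) : ∑ k ∈ range n, (ζ ^ j) ^ k = 0 := by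
  have hne : ζ ^ j ≠ 1 := fun h => hj ((hζ.pow_eq_one_iff_dvd j).mp h)
  rw [geom_sum_eq hne, ← pow_mul, mul_comm, pow_mul, hζ.pow_eq_one, one_pow, sub_self, zero_div]

theorem Complex.sq_norm_sub (w b : ℂ) :
    ‖w - b‖ ^ 2 = ‖w‖ ^ 2 + ‖b‖ ^ 2 - 2 * (conj w * b).re := by
  simp only [Complex.sq_norm, Complex.normSq_apply, sub_re, sub_im, mul_re, conj_re, conj_im]
  ring

theorem Complex.re_sq_eq_s4 (z : ℂ) : z.re ^ 2 = (‖z‖ ^ 2 + (z ^ 2).re) / 2 := by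
  rw [Complex.sq_norm, Complex.normSq_apply, sq z, Complex.mul_re]
  ring

theorem Complex.exp_I_mul_two_pi_mul_div_add (n k : ℕ) (θ : ℝ) :
    exp (I * ((2 * π * k / n + θ : ℝ) : ℂ)) = exp (θ * I) * exp (2 * π * I / n) ^ k := by
  rw [← exp_nat_mul, ← exp_add]
  push_cast
  ring_nf

namespace IsPrimitiveRoot

variable {ζ : ℂ} {n : ℕ}

theorem sum_re_mul_pow_eq_zero (hζ : IsPrimitiveRoot ζ n) (hn : 1 < n) (z : ℂ) :
    ∑ k ∈ range n, (z * ζ ^ k).re = 0 := by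
  have hsum := hζ.sum_pow_pow_eq_zero (j := 1) (Nat.not_dvd_of_pos_of_lt one_pos hn)
  simp only [pow_one] at hsum
  rw [← Complex.re_sum, ← mul_sum, hsum, mul_zero, zero_re]

theorem sum_re_mul_pow_sq (hζ : IsPrimitiveRoot ζ n) (hn : 2 < n) (z : ℂ) :
    ∑ k ∈ range n, (z * ζ ^ k).re ^ 2 = n * ‖z‖ ^ 2 / 2 := by
  have hnorm : ‖ζ‖ = 1 := hζ.norm'_eq_one (by omega)
  have hsum := hζ.sum_pow_pow_eq_zero (j := 2) (Nat.not_dvd_of_pos_of_lt two_pos hn)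
  have hsq (k : ℕ) : (z * ζ ^ k) ^ 2 = z ^ 2 * (ζ ^ 2) ^ k := by ring
  simp only [Complex.re_sq_eq_s4, norm_mul, norm_pow, hnorm, one_pow, mul_one, hsq, ← sum_div,
    sum_add_distrib, ← Complex.re_sum, ← mul_sum, hsum, mul_zero, zero_re, add_zero, sum_const,
    card_range, nsmul_eq_mul]

theorem sq_norm_sub_mul_pow (hζ : IsPrimitiveRoot ζ n) (hn : n ≠ 0) (w a : ℂ) (k : ℕ) :
    ‖w - a * ζ ^ k‖ ^ 2 = ‖w‖ ^ 2 + ‖a‖ ^ 2 - 2 * (conj w * a * ζ ^ k).re := by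
  rw [Complex.sq_norm_sub, norm_mul, norm_pow, hζ.norm'_eq_one hn, one_pow, mul_one,
    ← mul_assoc (conj w)]

theorem sum_sq_norm_sub_mul_pow (hζ : IsPrimitiveRoot ζ n) (hn : 1 < n) (w a : ℂ) :
    ∑ k ∈ range n, ‖w - a * ζ ^ k‖ ^ 2 = n * (‖w‖ ^ 2 + ‖a‖ ^ 2) := by
  rw [sum_congr rfl fun k _ => hζ.sq_norm_sub_mul_pow (by omega) w a k, sum_sub_distrib, ← mul_sum,
    hζ.sum_re_mul_pow_eq_zero hn, sum_const, card_range, nsmul_eq_mul, mul_zero, sub_zero]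

theorem sum_norm_sub_mul_pow_pow_four (hζ : IsPrimitiveRoot ζ n) (hn : 2 < n) (w a : ℂ) :
    ∑ k ∈ range n, ‖w - a * ζ ^ k‖ ^ 4
      = n * ((‖w‖ ^ 2 + ‖a‖ ^ 2) ^ 2 + 2 * ‖w‖ ^ 2 * ‖a‖ ^ 2) := by
  have hterm (k : ℕ) : ‖w - a * ζ ^ k‖ ^ 4 = (‖w‖ ^ 2 + ‖a‖ ^ 2) ^ 2
      - 4 * (‖w‖ ^ 2 + ‖a‖ ^ 2) * (conj w * a * ζ ^ k).re + 4 * (conj w * a * ζ ^ k).re ^ 2 := by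
    rw [show 4 = 2 * 2 from rfl, pow_mul, hζ.sq_norm_sub_mul_pow (by omega)]
    ring
  rw [sum_congr rfl fun k _ => hterm k, sum_add_distrib, sum_sub_distrib, ← mul_sum, ← mul_sum,
    hζ.sum_re_mul_pow_eq_zero (by omega), hζ.sum_re_mul_pow_sq hn, sum_const, card_range,
    nsmul_eq_mul, norm_mul, norm_conj]
  ring

end IsPrimitiveRoot

theorem S4_sub_S2_sq (n : ℕ) (hn : 3 ≤ n)
    (c M : ℂ) (R θ : ℝ) (hR : 0 < R) (L : ℝ) (hL : L = ‖M - c‖)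
    (S2 S4 : ℝ)
    (hS2 : S2 = (1 / n : ℝ) * ∑ k ∈ Finset.range n,
        (‖M - (c + R * Complex.exp (Complex.I * ((2 * π * k / n + θ : ℝ) : ℂ)))‖) ^ 2)
    (hS4 : S4 = (1 / n : ℝ) * ∑ k ∈ Finset.range n,
        (‖M - (c + R * Complex.exp (Complex.I * ((2 * π * k / n + θ : ℝ) : ℂ)))‖) ^ 4) :
    S4 - S2 ^ 2 = 2 * R ^ 2 * L ^ 2
      ∧ 0 ≤ 2 * R ^ 2 * L ^ 2
      ∧ S2 ^ 2 ≤ S4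
      ∧ (S4 = S2 ^ 2 ↔ M = c) := by
  have hζ : IsPrimitiveRoot (exp (2 * π * I / n)) n := isPrimitiveRoot_exp n (by omega)
  have hnorm : ‖(R : ℂ) * exp (θ * I)‖ = R := by
    rw [norm_mul, norm_exp_ofReal_mul_I, mul_one, norm_real, Real.norm_of_nonneg hR.le]
  have hvertex (k : ℕ) : M - (c + R * exp (I * ((2 * π * k / n + θ : ℝ) : ℂ)))
      = (M - c) - R * exp (θ * I) * exp (2 * π * I / n) ^ k := by
    rw [exp_I_mul_two_pi_mul_div_add]
    ring
  have hn0 : (n : ℝ) ≠ 0 := by positivity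
  have hS2' : S2 = L ^ 2 + R ^ 2 := by
    rw [hS2, sum_congr rfl fun k _ => by rw [hvertex k], hζ.sum_sq_norm_sub_mul_pow (by omega),
      hnorm, ← hL]
    field_simp
  have hS4' : S4 = (L ^ 2 + R ^ 2) ^ 2 + 2 * L ^ 2 * R ^ 2 := by
    rw [hS4, sum_congr rfl fun k _ => by rw [hvertex k],
      hζ.sum_norm_sub_mul_pow_pow_four (by omega), hnorm, ← hL]
    field_simp
  have hgap : S4 - S2 ^ 2 = 2 * R ^ 2 * L ^ 2 := by
    rw [hS2', hS4']
    ring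
  have hgap_nonneg : 0 ≤ 2 * R ^ 2 * L ^ 2 := by positivity
  refine ⟨hgap, hgap_nonneg, by linarith, ?_⟩
  rw [← sub_eq_zero, hgap, hL]
  simp [hR.ne', sub_eq_zero]
end

section
/- Let n ≥ 3, let a regular n-gon have center c₁, circumradius R₁ > 0, orientation α, and let M be a point with L₁ = |M − c₁| satisfying 0 < L₁ and L₁ ≠ R₁ (M is neither the center nor on the circumcircle). Then there exist a center c₂ and orientation β such that the regular n-gon with center c₂, circumradius L₁ and orientation β satisfies |M − c₂| = R₁, and the multiset of distances from M to its vertices equals the multiset of distances from M to the vertices of the original n-gon; since L₁ ≠ R₁ this second regular n-gon is not congruent to the first. -/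
open Complex Real Finset

/-! Put `u = (M - c₁) / L₁`, so that `M - c₁ = L₁ u` with `|u| = 1`, and take `c₂ = M - R₁ u`, `β = α`.
For the vertex with unit direction `e`, the two distances are `|L₁ u - R₁ e|` and `|R₁ u - L₁ e|`,
and `|a u - b e|² = a² + b² - 2ab ⟪u, e⟫` is symmetric in `a` and `b`. -/

theorem norm_smul_sub_smul_comm {E : Type*} [NormedAddCommGroup E] [InnerProductSpace ℝ E]
    {u v : E} (hu : ‖u‖ = 1) (hv : ‖v‖ = 1) (a b : ℝ) :
    ‖a • u - b • v‖ = ‖b • u - a • v‖ := by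
  have hsq : ‖a • u - b • v‖ ^ 2 = ‖b • u - a • v‖ ^ 2 := by
    simp only [norm_sub_sq_real, norm_smul, real_inner_smul_left, real_inner_smul_right, hu, hv,
      mul_one]
    ring
  exact (pow_left_inj₀ (norm_nonneg _) (norm_nonneg _) two_ne_zero).mp hsq

theorem exists_second_regular_polygon_general (n : ℕ)
    (c₁ M : ℂ) (R₁ α : ℝ) (hR₁ : 0 < R₁)
    (L₁ : ℝ) (hL₁ : L₁ = Norm.norm (M - c₁)) (hL₁pos : 0 < L₁) :
    ∃ (c₂ : ℂ) (β : ℝ),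
      Norm.norm (M - c₂) = R₁
        ∧ (Finset.range n).val.map
            (fun k => Norm.norm (M - (c₂ + L₁ * Complex.exp (Complex.I * ((2 * π * k / n + β : ℝ) : ℂ)))))
          = (Finset.range n).val.map
              (fun k => Norm.norm (M - (c₁ + R₁ * Complex.exp (Complex.I * ((2 * π * k / n + α : ℝ) : ℂ))))) := by
  set u : ℂ := (M - c₁) / L₁
  have hu : ‖u‖ = 1 := by
    rw [norm_div, norm_real, Real.norm_of_nonneg hL₁pos.le, ← hL₁, div_self hL₁pos.ne']
  have hM : M - c₁ = L₁ • u := by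
    rw [Complex.real_smul, mul_div_cancel₀ _ (ofReal_ne_zero.mpr hL₁pos.ne')]
  refine ⟨M - R₁ • u, α, ?_, Multiset.map_congr rfl fun k _ => ?_⟩
  · rw [sub_sub_cancel, norm_smul, hu, mul_one, Real.norm_of_nonneg hR₁.le]
  · set e : ℂ := Complex.exp (Complex.I * ((2 * π * k / n + α : ℝ) : ℂ))
    have he : ‖e‖ = 1 := norm_exp_I_mul_ofReal _
    calc ‖M - (M - R₁ • u + L₁ * e)‖ = ‖R₁ • u - L₁ • e‖ := by
          simp only [Complex.real_smul]; ring_nf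
      _ = ‖L₁ • u - R₁ • e‖ := norm_smul_sub_smul_comm hu he R₁ L₁
      _ = ‖M - (c₁ + R₁ * e)‖ := by
          rw [← hM]; simp only [Complex.real_smul]; ring_nf

theorem exists_second_regular_polygon (n : ℕ) (hn : 3 ≤ n)
    (c₁ M : ℂ) (R₁ α : ℝ) (hR₁ : 0 < R₁)
    (L₁ : ℝ) (hL₁ : L₁ = Norm.norm (M - c₁)) (hL₁pos : 0 < L₁) (hne : L₁ ≠ R₁) :
    ∃ (c₂ : ℂ) (β : ℝ),
      Norm.norm (M - c₂) = R₁
        ∧ (Finset.range n).val.map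
            (fun k => Norm.norm (M - (c₂ + L₁ * Complex.exp (Complex.I * ((2 * π * k / n + β : ℝ) : ℂ)))))
          = (Finset.range n).val.map
              (fun k => Norm.norm (M - (c₁ + R₁ * Complex.exp (Complex.I * ((2 * π * k / n + α : ℝ) : ℂ))))) :=
  exists_second_regular_polygon_general n c₁ M R₁ α hR₁ L₁ hL₁ hL₁pos
end

section
/- Let n ≥ 3. Suppose two regular n-gons, with centers c₁, c₂, circumradii R₁, R₂ > 0 and arbitrary orientations, have equal multisets of distances from a point M; write L₁ = |M − c₁| and L₂ = |M − c₂|. Then {R₁², L₁²} = {R₂², L₂²} as unordered pairs; in particular, if R₁ ≠ R₂ then R₂ = L₁ and L₂ = R₁, so the sizes of both regular n-gons are uniquely determined by the distances. -/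
/-!
The squared distance from `M` to the vertex `c + R e_k` of a regular `n`-gon is
`L² + R² - 2R⟪M - c, e_k⟫`. For `n ≥ 3` the unit vectors `e_k` satisfy `∑ e_k = ∑ e_k² = 0`, so
the first two power sums of the squared distances are `n (L² + R²)` and
`n ((L² + R²)² + 2 R² L²)`. Equal distance multisets therefore give equal `R² + L²` and `R² L²`,
so `{R², L²}` is the root pair of one and the same quadratic.
-/

open Complex ComplexConjugate Real Finset

lemma eq_and_eq_or_eq_and_eq_of_add_eq_of_mul_eq {R : Type*} [CommRing R] [NoZeroDivisors R]
    {a b c d : R} (hadd : a + b = c + d) (hmul : a * b = c * d) :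
    (a = c ∧ b = d) ∨ (a = d ∧ b = c) := by
  have hroots : (c - a) * (c - b) = 0 := by linear_combination (-c) * hadd + hmul
  rcases mul_eq_zero.1 hroots with h | h
  · exact .inl ⟨by linear_combination -h, by linear_combination hadd + h⟩
  · exact .inr ⟨by linear_combination hadd + h, by linear_combination -h⟩

section UnitVectors

variable {ι : Type*} {s : Finset ι} {e : ι → ℂ}

lemma ofReal_normSq_sub_ofReal_mul {z : ℂ} (hz : ‖z‖ = 1) (d : ℂ) (r : ℝ) :
    (normSq (d - r * z) : ℂ) = normSq d + r ^ 2 - r * (d * conj z + conj d * z) := by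
  have hzz : z * conj z = 1 := by rw [mul_conj, ← Complex.sq_norm, hz]; norm_num
  simp only [← mul_conj, map_sub, map_mul, conj_ofReal]
  linear_combination (r : ℂ) ^ 2 * hzz

lemma sum_normSq_sub_ofReal_mul (he : ∀ i ∈ s, ‖e i‖ = 1) (h1 : ∑ i ∈ s, e i = 0)
    (d : ℂ) (r : ℝ) :
    ∑ i ∈ s, normSq (d - r * e i) = #s * (normSq d + r ^ 2) := by
  have h1' : ∑ i ∈ s, conj (e i) = 0 := by rw [← map_sum, h1, map_zero]
  apply ofReal_injective
  push_cast
  rw [sum_congr rfl fun i hi => ofReal_normSq_sub_ofReal_mul (he i hi) d r]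
  simp [sum_sub_distrib, sum_add_distrib, ← mul_sum, h1, h1', mul_add]

lemma sum_normSq_sub_ofReal_mul_sq (he : ∀ i ∈ s, ‖e i‖ = 1) (h1 : ∑ i ∈ s, e i = 0)
    (h2 : ∑ i ∈ s, e i ^ 2 = 0) (d : ℂ) (r : ℝ) :
    ∑ i ∈ s, normSq (d - r * e i) ^ 2
      = #s * ((normSq d + r ^ 2) ^ 2 + 2 * r ^ 2 * normSq d) := by
  have h1' : ∑ i ∈ s, conj (e i) = 0 := by rw [← map_sum, h1, map_zero]
  have h2' : ∑ i ∈ s, conj (e i) ^ 2 = 0 := by simp only [← map_pow, ← map_sum, h2, map_zero]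
  have hpoint : ∀ i ∈ s, (normSq (d - r * e i) ^ 2 : ℂ)
      = (normSq d + r ^ 2) ^ 2 + 2 * r ^ 2 * normSq d
        - 2 * r * (normSq d + r ^ 2) * (d * conj (e i) + conj d * e i)
        + r ^ 2 * (d ^ 2 * conj (e i) ^ 2 + conj d ^ 2 * e i ^ 2) := by
    intro i hi
    have hee : e i * conj (e i) = 1 := by rw [mul_conj, ← Complex.sq_norm, he i hi]; norm_num
    rw [ofReal_normSq_sub_ofReal_mul (he i hi), ← mul_conj]
    linear_combination (2 * r ^ 2 * d * conj d) * hee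
  apply ofReal_injective
  push_cast
  rw [sum_congr rfl hpoint]
  simp [sum_sub_distrib, sum_add_distrib, ← mul_sum, h1, h1', h2, h2', mul_add]

end UnitVectors

lemma sum_range_exp_pow_eq_zero {n m : ℕ} (hm : m ≠ 0) (hmn : m < n) (θ : ℝ) :
    ∑ k ∈ range n, exp (I * ((2 * π * k / n + θ : ℝ) : ℂ)) ^ m = 0 := by
  have hζ := isPrimitiveRoot_exp n (by omega)
  have hterm : ∀ k ∈ range n, exp (I * ((2 * π * k / n + θ : ℝ) : ℂ)) ^ m
      = exp (I * θ) ^ m * (exp (2 * π * I / n) ^ m) ^ k := by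
    intro k _
    rw [← pow_mul, ← Complex.exp_nat_mul, ← Complex.exp_nat_mul, ← Complex.exp_nat_mul,
      ← Complex.exp_add]
    congr 1
    push_cast
    field_simp
    ring
  rw [sum_congr rfl hterm, ← mul_sum, geom_sum_eq (hζ.pow_ne_one_of_pos_of_lt hm hmn),
    ← pow_mul, mul_comm m n, pow_mul, hζ.pow_eq_one, one_pow, sub_self, zero_div, mul_zero]

noncomputable def regularPolygonVertex (n : ℕ) (c : ℂ) (R θ : ℝ) (k : ℕ) : ℂ :=
  c + R * exp (I * ((2 * π * k / n + θ : ℝ) : ℂ))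

section RegularPolygon

variable {n : ℕ} (c M : ℂ) (R θ : ℝ)

lemma sum_range_norm_sub_regularPolygonVertex_sq (hn : 2 ≤ n) :
    ∑ k ∈ range n, ‖M - regularPolygonVertex n c R θ k‖ ^ 2 = n * (‖M - c‖ ^ 2 + R ^ 2) := by
  have := sum_normSq_sub_ofReal_mul (fun k _ => norm_exp_I_mul_ofReal _)
    (by simpa only [pow_one] using sum_range_exp_pow_eq_zero one_ne_zero hn θ) (M - c) R
  simpa only [regularPolygonVertex, Complex.sq_norm, sub_add_eq_sub_sub, card_range] using this

lemma sum_range_norm_sub_regularPolygonVertex_pow_four (hn : 3 ≤ n) :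
    ∑ k ∈ range n, ‖M - regularPolygonVertex n c R θ k‖ ^ 4
      = n * ((‖M - c‖ ^ 2 + R ^ 2) ^ 2 + 2 * R ^ 2 * ‖M - c‖ ^ 2) := by
  have := sum_normSq_sub_ofReal_mul_sq (fun k _ => norm_exp_I_mul_ofReal _)
    (by simpa only [pow_one] using sum_range_exp_pow_eq_zero one_ne_zero (by omega) θ)
    (sum_range_exp_pow_eq_zero two_ne_zero hn θ) (M - c) R
  have hpow : ∀ z : ℂ, ‖z‖ ^ 4 = normSq z ^ 2 := fun z => by rw [← Complex.sq_norm]; ring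
  simpa only [regularPolygonVertex, hpow, Complex.sq_norm, sub_add_eq_sub_sub, card_range]
    using this

end RegularPolygon

lemma sq_add_sq_eq_and_sq_mul_sq_eq_of_map_norm_sub_eq {n : ℕ} (hn : 3 ≤ n) {c₁ c₂ M : ℂ}
    {R₁ R₂ α β : ℝ}
    (hdist : (range n).val.map (fun k => ‖M - regularPolygonVertex n c₁ R₁ α k‖)
      = (range n).val.map (fun k => ‖M - regularPolygonVertex n c₂ R₂ β k‖)) :
    R₁ ^ 2 + ‖M - c₁‖ ^ 2 = R₂ ^ 2 + ‖M - c₂‖ ^ 2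
      ∧ R₁ ^ 2 * ‖M - c₁‖ ^ 2 = R₂ ^ 2 * ‖M - c₂‖ ^ 2 := by
  have hmoment (p : ℕ) : ∑ k ∈ range n, ‖M - regularPolygonVertex n c₁ R₁ α k‖ ^ p
      = ∑ k ∈ range n, ‖M - regularPolygonVertex n c₂ R₂ β k‖ ^ p := by
    simpa only [Multiset.map_map, Function.comp_def, sum_map_val]
      using congrArg (fun m => (m.map (· ^ p)).sum) hdist
  have h2 := hmoment 2
  have h4 := hmoment 4
  rw [sum_range_norm_sub_regularPolygonVertex_sq _ _ _ _ (by omega),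
    sum_range_norm_sub_regularPolygonVertex_sq _ _ _ _ (by omega)] at h2
  rw [sum_range_norm_sub_regularPolygonVertex_pow_four _ _ _ _ hn,
    sum_range_norm_sub_regularPolygonVertex_pow_four _ _ _ _ hn] at h4
  have hn0 : (n : ℝ) ≠ 0 := by positivity
  have hsum := mul_left_cancel₀ hn0 h2
  refine ⟨by linarith, ?_⟩
  linear_combination (mul_left_cancel₀ hn0 h4) / 2
    - (‖M - c₁‖ ^ 2 + R₁ ^ 2 + ‖M - c₂‖ ^ 2 + R₂ ^ 2) / 2 * hsum

theorem sizes_uniquely_determined (n : ℕ) (hn : 3 ≤ n)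
    (c₁ c₂ M : ℂ) (R₁ R₂ α β : ℝ) (hR₁ : 0 < R₁) (hR₂ : 0 < R₂)
    (L₁ L₂ : ℝ) (hL₁ : L₁ = ‖M - c₁‖) (hL₂ : L₂ = ‖M - c₂‖)
    (hdist : (Finset.range n).val.map
        (fun k => ‖M - (c₁ + R₁ * Complex.exp (Complex.I * ((2 * π * k / n + α : ℝ) : ℂ)))‖)
      = (Finset.range n).val.map
          (fun k => ‖M - (c₂ + R₂ * Complex.exp (Complex.I * ((2 * π * k / n + β : ℝ) : ℂ)))‖)) :
    ({R₁ ^ 2, L₁ ^ 2} : Multiset ℝ) = ({R₂ ^ 2, L₂ ^ 2} : Multiset ℝ)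
      ∧ (R₁ ≠ R₂ → R₂ = L₁ ∧ L₂ = R₁) := by
  -- `k` ranges over `ℝ` in `hdist`: `(range n).val` is cast to `Multiset ℝ` via the monad structure.
  simp only [Bind.bind, Pure.pure, Multiset.bind_singleton, Multiset.map_map,
    Function.comp_def] at hdist
  obtain ⟨hsum, hprod⟩ := sq_add_sq_eq_and_sq_mul_sq_eq_of_map_norm_sub_eq hn hdist
  rw [← hL₁, ← hL₂] at hsum hprod
  have hL₁0 : 0 ≤ L₁ := hL₁ ▸ norm_nonneg _
  have hL₂0 : 0 ≤ L₂ := hL₂ ▸ norm_nonneg _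
  rcases eq_and_eq_or_eq_and_eq_of_add_eq_of_mul_eq hsum hprod with ⟨hR, hL⟩ | ⟨hRL, hLR⟩
  · exact ⟨by rw [hR, hL], fun hne => absurd ((sq_eq_sq₀ hR₁.le hR₂.le).1 hR) hne⟩
  · exact ⟨by rw [hRL, hLR, Multiset.pair_comm],
      fun _ => ⟨(sq_eq_sq₀ hR₂.le hL₁0).1 hLR.symm, (sq_eq_sq₀ hL₂0 hR₁.le).1 hRL.symm⟩⟩
end

section
/- (Pompeiu) Let an equilateral triangle have vertices v_k = c + R·exp(I·(2πk/3 + θ)), k = 0,1,2, with R > 0, and let M be any point in its plane with distances d_k = |M − v_k|. Then d₀, d₁, d₂ satisfy all three triangle inequalities: d₀ ≤ d₁ + d₂, d₁ ≤ d₀ + d₂, and d₂ ≤ d₀ + d₁. -/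
/-!
The vertices are `c + z`, `c + z ω`, `c + z ω²` with `z = R e^{iθ}` and `ω = e^{2πi/3}` a primitive
cube root of unity, so all three sides have the same positive length `s`. Ptolemy's inequality for
the quadrangle `M v₁ v₀ v₂` reads `d₀ s ≤ d₁ s + d₂ s`; cancelling `s` gives the claim, and the
other two inequalities follow by permuting the vertices.
-/

open Complex Real

theorem EuclideanGeometry.dist_le_dist_add_dist_of_equilateral {V P : Type*}
    [NormedAddCommGroup V] [InnerProductSpace ℝ V] [MetricSpace P] [NormedAddTorsor V P]
    {a b c : P} {s : ℝ} (p : P) (hab : dist a b = s) (hbc : dist b c = s) (hac : dist a c = s)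
    (hs : 0 < s) : dist p a ≤ dist p b + dist p c := by
  have h := mul_dist_le_mul_dist_add_mul_dist p b a c
  rw [hbc, hac, dist_comm b a, hab, mul_comm s, ← add_mul] at h
  exact le_of_mul_le_mul_right h hs

theorem Complex.dist_add_mul_pow_of_pow_three_eq_one (c z : ℂ) {ω : ℂ} (hω : ω ^ 3 = 1) :
    dist (c + z) (c + z * ω) = ‖z‖ * ‖1 - ω‖ ∧
      dist (c + z * ω) (c + z * ω ^ 2) = ‖z‖ * ‖1 - ω‖ ∧
      dist (c + z) (c + z * ω ^ 2) = ‖z‖ * ‖1 - ω‖ := by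
  have hω1 : ‖ω‖ = 1 := norm_eq_one_of_pow_eq_one hω three_ne_zero
  refine ⟨?_, ?_, ?_⟩ <;> rw [Complex.dist_eq]
  · rw [show c + z - (c + z * ω) = z * (1 - ω) by ring, norm_mul]
  · rw [show c + z * ω - (c + z * ω ^ 2) = z * ω * (1 - ω) by ring, norm_mul, norm_mul, hω1,
      mul_one]
  · rw [show c + z - (c + z * ω ^ 2) = -(z * ω ^ 2 * (1 - ω)) by linear_combination -z * hω,
      norm_neg, norm_mul, norm_mul, norm_pow, hω1, one_pow, mul_one]

theorem Complex.exp_I_mul_two_pi_mul_div_three_add (k : ℕ) (θ : ℝ) :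
    exp (I * ((2 * π * k / 3 + θ : ℝ) : ℂ)) = exp (θ * I) * exp (2 * π * I / 3) ^ k := by
  rw [← exp_nat_mul, ← exp_add]
  push_cast
  congr 1
  ring

theorem pompeiu (c M : ℂ) (R θ : ℝ) (hR : 0 < R)
    (d : Fin 3 → ℝ)
    (hd : ∀ k : Fin 3,
      d k = ‖M - (c + R * Complex.exp (Complex.I * ((2 * π * (k : ℕ) / 3 + θ : ℝ) : ℂ)))‖) :
    d 0 ≤ d 1 + d 2 ∧ d 1 ≤ d 0 + d 2 ∧ d 2 ≤ d 0 + d 1 := by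
  set ω := exp (2 * π * I / 3)
  set z := R * exp (θ * I)
  have hdist : ∀ k : Fin 3, d k = dist M (c + z * ω ^ (k : ℕ)) := fun k => by
    rw [hd k, exp_I_mul_two_pi_mul_div_three_add, Complex.dist_eq, ← mul_assoc]
  have hω : IsPrimitiveRoot ω 3 := by simpa using isPrimitiveRoot_exp 3 three_ne_zero
  have hs : 0 < ‖z‖ * ‖1 - ω‖ := by
    have hz : ‖z‖ = R := by simp [z, hR.le]
    rw [hz]
    exact mul_pos hR (norm_pos_iff.2 (sub_ne_zero.2 (hω.ne_one (by norm_num)).symm))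
  obtain ⟨h01, h12, h02⟩ := dist_add_mul_pow_of_pow_three_eq_one c z hω.pow_eq_one
  simp only [hdist, Fin.val_zero, Fin.val_one, Fin.val_two, pow_zero, pow_one, mul_one]
  exact ⟨EuclideanGeometry.dist_le_dist_add_dist_of_equilateral M h01 h12 h02 hs,
    EuclideanGeometry.dist_le_dist_add_dist_of_equilateral M
      ((dist_comm _ _).trans h01) h02 h12 hs,
    EuclideanGeometry.dist_le_dist_add_dist_of_equilateral M
      ((dist_comm _ _).trans h02) h01 ((dist_comm _ _).trans h12) hs⟩
end

section
/- (Degenerate Pompeiu / Van Schooten) Let an equilateral triangle have vertices v_k = c + R·exp(I·(2πk/3 + θ)), k = 0,1,2, with R > 0, and let M lie on its circumcircle, i.e. |M − c| = R. Then the triangle with side lengths d₀, d₁, d₂ (d_k = |M − v_k|) is degenerate: some one of the three distances equals the sum of the other two, i.e. there is a permutation (i,j,k) of (0,1,2) with d_i = d_j + d_k. -/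
open Complex Real Finset

/-! Writing `M = c + R e^{iψ}`, the chord lengths are `d_k = |2R sin (s - kπ/3)|` with
`s = (ψ - θ)/2`, and `sin s + sin (s - 2π/3) = sin (s - π/3)`. Whenever `x + z = y`, one of
`|x|, |y|, |z|` is the sum of the other two. -/

lemma abs_eq_abs_add_abs_of_add_eq {α : Type*} [AddCommGroup α] [LinearOrder α]
    [IsOrderedAddMonoid α] {a b c : α} (h : a + c = b) :
    |a| = |b| + |c| ∨ |b| = |a| + |c| ∨ |c| = |a| + |b| := by
  have hb : (0 ≤ a ∧ 0 ≤ c ∨ a ≤ 0 ∧ c ≤ 0) → |b| = |a| + |c| := fun hs =>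
    h ▸ (abs_add_eq_add_abs_iff a c).2 hs
  have ha : (0 ≤ b ∧ 0 ≤ -c ∨ b ≤ 0 ∧ -c ≤ 0) → |a| = |b| + |c| := fun hs => by
    rw [← abs_neg c, ← (abs_add_eq_add_abs_iff b (-c)).2 hs, ← h, add_neg_cancel_right]
  have hc : (0 ≤ b ∧ 0 ≤ -a ∨ b ≤ 0 ∧ -a ≤ 0) → |c| = |a| + |b| := fun hs => by
    rw [add_comm, ← abs_neg a, ← (abs_add_eq_add_abs_iff b (-a)).2 hs, ← h, add_neg_cancel_comm]
  rw [neg_nonneg, neg_nonpos] at ha hc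
  rcases le_total 0 a with h0a | h0a <;> rcases le_total 0 b with h0b | h0b <;>
    rcases le_total 0 c with h0c | h0c <;> tauto

lemma Complex.norm_exp_I_mul_sub_exp_I_mul (a b : ℝ) :
    ‖exp (I * a) - exp (I * b)‖ = |2 * Real.sin ((a - b) / 2)| := by
  have hfactor : exp (I * a) - exp (I * b) = exp (I * b) * (exp (I * ↑(a - b)) - 1) := by
    rw [mul_sub, ← Complex.exp_add]; push_cast; ring_nf
  rw [hfactor, norm_mul, norm_exp_I_mul_ofReal_sub_one, mul_comm I, norm_exp_ofReal_mul_I,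
    one_mul, Real.norm_eq_abs]

lemma Real.sin_add_sin_sub_two_pi_div_three (x : ℝ) :
    sin x + sin (x - 2 * π / 3) = sin (x - π / 3) := by
  rw [Real.sin_add_sin, show (x - (x - 2 * π / 3)) / 2 = π / 3 by ring, cos_pi_div_three]
  ring_nf

theorem degenerate_pompeiu_van_schooten_general (c M : ℂ) (R θ : ℝ)
    (hM : ‖M - c‖ = R)
    (d : Fin 3 → ℝ)
    (hd : ∀ k : Fin 3,
      d k = ‖M - (c + R * Complex.exp (Complex.I * ((2 * π * (k : ℕ) / 3 + θ : ℝ) : ℂ)))‖) :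
    d 0 = d 1 + d 2 ∨ d 1 = d 0 + d 2 ∨ d 2 = d 0 + d 1 := by
  set ψ := arg (M - c)
  have hMc : M - c = R * exp (I * ψ) := by
    rw [← hM, mul_comm I]; exact (norm_mul_exp_arg_mul_I _).symm
  have hdist : ∀ k : Fin 3, d k = |2 * R * Real.sin ((ψ - (2 * π * (k : ℕ) / 3 + θ)) / 2)| := by
    intro k
    rw [hd k, ← sub_sub, hMc, ← mul_sub, norm_mul, norm_real, norm_exp_I_mul_sub_exp_I_mul,
      Real.norm_eq_abs, ← abs_mul, mul_left_comm, ← mul_assoc]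
  rw [hdist 0, hdist 1, hdist 2]
  refine abs_eq_abs_add_abs_of_add_eq ?_
  simp only [Fin.val_zero, Fin.val_one, Fin.val_two]
  push_cast
  rw [← mul_add]
  congr 1
  convert Real.sin_add_sin_sub_two_pi_div_three ((ψ - θ) / 2) using 3 <;> ring

theorem degenerate_pompeiu_van_schooten (c M : ℂ) (R θ : ℝ) (hR : 0 < R)
    (hM : ‖M - c‖ = R)
    (d : Fin 3 → ℝ)
    (hd : ∀ k : Fin 3,
      d k = ‖M - (c + R * Complex.exp (Complex.I * ((2 * π * (k : ℕ) / 3 + θ : ℝ) : ℂ)))‖) :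
    d 0 = d 1 + d 2 ∨ d 1 = d 0 + d 2 ∨ d 2 = d 0 + d 1 :=
  degenerate_pompeiu_van_schooten_general c M R θ hM d hd
end

section
/- Let an equilateral triangle have vertices v_k = c + R·exp(I·(2πk/3 + θ)), k = 0,1,2, with R > 0, and let M be a point with L = |M − c| ≤ R (M inside or on the circumcircle) and d_k = |M − v_k|. Then 6R² = d₀² + d₁² + d₂² + 4√3·Δ and 6L² = d₀² + d₁² + d₂² − 4√3·Δ, where Δ is the area of the Pompeiu triangle with sides d₀, d₁, d₂. -/
open Real
open Complex hiding cos sin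

/-! Write `d_k² = L² + R² - 2R·u_k`, where `u_k` is the component of `M - c` along the unit
vector from `c` towards `v_k`. For three unit vectors at angles `2π/3` apart, `∑ u_k = 0` and
`∑ u_k² = 3L²/2`. Hence `∑ d_k² = 3(L² + R²)` and `∑ d_k⁴ = 3(L² + R²)² + 6R²L²`, and Heron's
formula `16Δ² = (∑ d_k²)² - 2 ∑ d_k⁴` yields `16Δ² = 3(R² - L²)²`, i.e. `4√3·Δ = 3(R² - L²)`
since `L ≤ R`. -/

lemma heron_product_eq (a b c : ℝ) :
    (a + b + c) * (-a + b + c) * (a - b + c) * (a + b - c)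
      = (a ^ 2 + b ^ 2 + c ^ 2) ^ 2 - 2 * ((a ^ 2) ^ 2 + (b ^ 2) ^ 2 + (c ^ 2) ^ 2) := by
  ring

lemma cos_two_pi_div_three : cos (2 * π / 3) = -(1 / 2) := by
  rw [show 2 * π / 3 = π - π / 3 by ring, Real.cos_pi_sub, Real.cos_pi_div_three]

lemma sin_two_pi_div_three : sin (2 * π / 3) = √3 / 2 := by
  rw [show 2 * π / 3 = π - π / 3 by ring, Real.sin_pi_sub, Real.sin_pi_div_three]

lemma cos_four_pi_div_three : cos (4 * π / 3) = -(1 / 2) := by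
  rw [show 4 * π / 3 = π / 3 + π by ring, Real.cos_add_pi, Real.cos_pi_div_three]

lemma sin_four_pi_div_three : sin (4 * π / 3) = -(√3 / 2) := by
  rw [show 4 * π / 3 = π / 3 + π by ring, Real.sin_add_pi, Real.sin_pi_div_three]

lemma sum_fin_three_equilateral (f : ℝ → ℝ → ℝ) :
    ∑ k : Fin 3, f (cos (2 * π * ((k : ℕ) : ℝ) / 3)) (sin (2 * π * ((k : ℕ) : ℝ) / 3))
      = f 1 0 + f (-(1 / 2)) (√3 / 2) + f (-(1 / 2)) (-(√3 / 2)) := by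
  simp only [Fin.sum_univ_three, Fin.val_zero, Fin.val_one, Fin.val_two, Nat.cast_zero,
    Nat.cast_one, Nat.cast_ofNat, mul_zero, zero_div, mul_one,
    show 2 * π * 2 / 3 = 4 * π / 3 by ring, Real.cos_zero, Real.sin_zero, cos_two_pi_div_three,
    sin_two_pi_div_three, cos_four_pi_div_three, sin_four_pi_div_three]

lemma sum_proj_equilateral (x y : ℝ) :
    ∑ k : Fin 3,
        (x * cos (2 * π * ((k : ℕ) : ℝ) / 3) + y * sin (2 * π * ((k : ℕ) : ℝ) / 3))
      = 0 :=
  (sum_fin_three_equilateral fun c s ↦ x * c + y * s).trans (by ring)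

lemma sum_sq_proj_equilateral (x y : ℝ) :
    ∑ k : Fin 3,
        (x * cos (2 * π * ((k : ℕ) : ℝ) / 3) + y * sin (2 * π * ((k : ℕ) : ℝ) / 3)) ^ 2
      = 3 / 2 * (x ^ 2 + y ^ 2) :=
  (sum_fin_three_equilateral fun c s ↦ (x * c + y * s) ^ 2).trans <| by
    linear_combination y ^ 2 / 2 * Real.sq_sqrt (show (0 : ℝ) ≤ 3 by norm_num)

lemma norm_sub_rotate (M c : ℂ) (R t θ : ℝ) :
    ‖M - (c + R * exp (I * ((t + θ : ℝ) : ℂ)))‖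
      = ‖(M - c) * exp (-(θ * I)) - R * exp (t * I)‖ := by
  have hrot : M - (c + R * exp (I * ((t + θ : ℝ) : ℂ)))
      = ((M - c) * exp (-(θ * I)) - R * exp (t * I)) * exp (θ * I) := by
    rw [show I * ((t + θ : ℝ) : ℂ) = t * I + θ * I by push_cast; ring, Complex.exp_add,
      Complex.exp_neg]
    field_simp [Complex.exp_ne_zero]
    ring
  rw [hrot, norm_mul, norm_exp_ofReal_mul_I, mul_one]

lemma sq_norm_sub_mul_exp (z : ℂ) (R t : ℝ) :
    ‖z - R * exp (t * I)‖ ^ 2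
      = ‖z‖ ^ 2 + R ^ 2 - 2 * R * (z.re * cos t + z.im * sin t) := by
  rw [Complex.sq_norm, Complex.sq_norm, normSq_apply, normSq_apply]
  simp only [sub_re, sub_im, mul_re, mul_im, exp_ofReal_mul_I_re, exp_ofReal_mul_I_im,
    ofReal_re, ofReal_im]
  linear_combination R ^ 2 * Real.sin_sq_add_cos_sq t

theorem equilateral_R_L_from_distances_general (c M : ℂ) (R θ : ℝ)
    (L : ℝ) (hL : L = ‖M - c‖) (hLR : L ≤ R)
    (d : Fin 3 → ℝ)
    (hd : ∀ k : Fin 3,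
      d k = ‖M - (c + R * Complex.exp (Complex.I * ((2 * π * (k : ℕ) / 3 + θ : ℝ) : ℂ)))‖)
    (Δ : ℝ)
    (hΔ : Δ = (1 / 4) * Real.sqrt
      ((d 0 + d 1 + d 2) * (-d 0 + d 1 + d 2) * (d 0 - d 1 + d 2) * (d 0 + d 1 - d 2))) :
    6 * R ^ 2 = d 0 ^ 2 + d 1 ^ 2 + d 2 ^ 2 + 4 * Real.sqrt 3 * Δ
      ∧ 6 * L ^ 2 = d 0 ^ 2 + d 1 ^ 2 + d 2 ^ 2 - 4 * Real.sqrt 3 * Δ := by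
  set z := (M - c) * exp (-(θ * I))
  have hz : ‖z‖ = L := by simp [z, hL, Complex.norm_exp]
  have hz_sq : z.re ^ 2 + z.im ^ 2 = L ^ 2 := by
    rw [← hz, Complex.sq_norm, normSq_apply]
    ring
  set u : Fin 3 → ℝ := fun k =>
    z.re * cos (2 * π * ((k : ℕ) : ℝ) / 3) + z.im * sin (2 * π * ((k : ℕ) : ℝ) / 3)
  have hd_sq (k : Fin 3) : d k ^ 2 = L ^ 2 + R ^ 2 - 2 * R * u k := by
    rw [hd k, norm_sub_rotate, sq_norm_sub_mul_exp, hz]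
  have hu : u 0 + u 1 + u 2 = 0 := by
    rw [← Fin.sum_univ_three]
    exact sum_proj_equilateral _ _
  have hu_sq : u 0 ^ 2 + u 1 ^ 2 + u 2 ^ 2 = 3 / 2 * L ^ 2 := by
    rw [← Fin.sum_univ_three (fun k => u k ^ 2), ← hz_sq]
    exact sum_sq_proj_equilateral _ _
  have hsum_sq : d 0 ^ 2 + d 1 ^ 2 + d 2 ^ 2 = 3 * (L ^ 2 + R ^ 2) := by
    rw [hd_sq 0, hd_sq 1, hd_sq 2]
    linear_combination -2 * R * hu
  have hsum_fourth : (d 0 ^ 2) ^ 2 + (d 1 ^ 2) ^ 2 + (d 2 ^ 2) ^ 2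
      = 3 * (L ^ 2 + R ^ 2) ^ 2 + 6 * R ^ 2 * L ^ 2 := by
    rw [hd_sq 0, hd_sq 1, hd_sq 2]
    linear_combination -4 * R * (L ^ 2 + R ^ 2) * hu + 4 * R ^ 2 * hu_sq
  have hΔ_eq : 4 * √3 * Δ = 3 * (R ^ 2 - L ^ 2) := by
    have h3 : √3 ^ 2 = 3 := Real.sq_sqrt (by norm_num)
    have hL_nonneg : 0 ≤ L := hL ▸ norm_nonneg _
    have hRL : 0 ≤ R ^ 2 - L ^ 2 := by nlinarith
    rw [hΔ, heron_product_eq, hsum_sq, hsum_fourth,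
      show (3 * (L ^ 2 + R ^ 2)) ^ 2 - 2 * (3 * (L ^ 2 + R ^ 2) ^ 2 + 6 * R ^ 2 * L ^ 2)
        = (√3 * (R ^ 2 - L ^ 2)) ^ 2 by linear_combination -(R ^ 2 - L ^ 2) ^ 2 * h3,
      Real.sqrt_sq (by positivity)]
    linear_combination (R ^ 2 - L ^ 2) * h3
  constructor
  · linear_combination -hsum_sq - hΔ_eq
  · linear_combination -hsum_sq + hΔ_eq

theorem equilateral_R_L_from_distances (c M : ℂ) (R θ : ℝ) (hR : 0 < R)
    (L : ℝ) (hL : L = ‖M - c‖) (hLR : L ≤ R)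
    (d : Fin 3 → ℝ)
    (hd : ∀ k : Fin 3,
      d k = ‖M - (c + R * Complex.exp (Complex.I * ((2 * π * (k : ℕ) / 3 + θ : ℝ) : ℂ)))‖)
    (Δ : ℝ)
    (hΔ : Δ = (1 / 4) * Real.sqrt
      ((d 0 + d 1 + d 2) * (-d 0 + d 1 + d 2) * (d 0 - d 1 + d 2) * (d 0 + d 1 - d 2))) :
    6 * R ^ 2 = d 0 ^ 2 + d 1 ^ 2 + d 2 ^ 2 + 4 * Real.sqrt 3 * Δ
      ∧ 6 * L ^ 2 = d 0 ^ 2 + d 1 ^ 2 + d 2 ^ 2 - 4 * Real.sqrt 3 * Δ :=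
  equilateral_R_L_from_distances_general c M R θ L hL hLR d hd Δ hΔ
end

section
/- Let n ≥ 1 and let x, d : Fin n → ℝ be families of nonnegative real numbers such that x 0 = d 0 and ∑_{i} x_i^{2m} = ∑_{i} d_i^{2m} for every m with 1 ≤ m ≤ n − 1. Then the multiset {x_0, …, x_{n−1}} equals the multiset {d_0, …, d_{n−1}}. -/
open Finset Polynomial

private lemma exists_fn (k : ℕ) (s : Multiset ℝ) (h : Multiset.card s = k) :
    ∃ f : Fin k → ℝ, Multiset.map f Finset.univ.val = s := by
  induction s using Quotient.inductionOn with
  | h l =>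
    simp only [Multiset.quot_mk_to_coe, Multiset.coe_card] at h
    subst h
    refine ⟨l.get, ?_⟩
    rw [Fin.univ_def]
    show ((List.finRange l.length : Multiset (Fin l.length)).map l.get) = _
    rw [Multiset.map_coe, ← List.ofFn_eq_map, List.ofFn_get]; rfl

private lemma esymm_eq (k : ℕ) (f g : Fin k → ℝ)
    (hp : ∀ m : ℕ, 1 ≤ m → m ≤ k → ∑ i, f i ^ m = ∑ i, g i ^ m) :
    ∀ j, j ≤ k → (Multiset.map f Finset.univ.val).esymm j
      = (Multiset.map g Finset.univ.val).esymm j := by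
  have newton : ∀ h : Fin k → ℝ, ∀ j : ℕ,
      (j : ℝ) * (Multiset.map h Finset.univ.val).esymm j = (-1) ^ (j + 1) *
        ∑ a ∈ Finset.HasAntidiagonal.antidiagonal j with a.1 < j,
          (-1 : ℝ) ^ a.1 * (Multiset.map h Finset.univ.val).esymm a.1 * (∑ i, h i ^ a.2) := by
    intro h j
    have := congrArg (MvPolynomial.aeval h) (MvPolynomial.mul_esymm_eq_sum (Fin k) ℝ j)
    simp only [map_mul, map_sum, MvPolynomial.aeval_esymm_eq_multiset_esymm] at this
    simpa [MvPolynomial.psum, MvPolynomial.aeval_esymm_eq_multiset_esymm, map_sum] using this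
  intro j
  induction j using Nat.strong_induction_on with
  | _ j ih =>
    intro hjk
    match j with
    | 0 => simp [Multiset.esymm]
    | (j + 1) =>
      have h1 := newton f (j + 1)
      have h2 := newton g (j + 1)
      have hsum : ∑ a ∈ Finset.HasAntidiagonal.antidiagonal (j + 1) with a.1 < j + 1,
            (-1 : ℝ) ^ a.1 * (Multiset.map f Finset.univ.val).esymm a.1 * (∑ i, f i ^ a.2)
          = ∑ a ∈ Finset.HasAntidiagonal.antidiagonal (j + 1) with a.1 < j + 1,
            (-1 : ℝ) ^ a.1 * (Multiset.map g Finset.univ.val).esymm a.1 * (∑ i, g i ^ a.2) := by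
        refine Finset.sum_congr rfl ?_
        rintro ⟨a, b⟩ hab
        simp only [Finset.mem_filter, Finset.HasAntidiagonal.mem_antidiagonal] at hab
        obtain ⟨hab1, hab2⟩ := hab
        have hb1 : 1 ≤ b := by omega
        have hbk : b ≤ k := by omega
        rw [ih a hab2 (by omega), hp b hb1 hbk]
      have : ((j + 1 : ℕ) : ℝ) * (Multiset.map f Finset.univ.val).esymm (j + 1)
          = ((j + 1 : ℕ) : ℝ) * (Multiset.map g Finset.univ.val).esymm (j + 1) := by
        rw [h1, h2, hsum]
      exact mul_left_cancel₀ (by positivity) this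

private lemma psums_det (k : ℕ) (f g : Fin k → ℝ)
    (hp : ∀ m : ℕ, 1 ≤ m → m ≤ k → ∑ i, f i ^ m = ∑ i, g i ^ m) :
    Multiset.map f Finset.univ.val = Multiset.map g Finset.univ.val := by
  have he := esymm_eq k f g hp
  have hcard : ∀ h : Fin k → ℝ, Multiset.card (Multiset.map h Finset.univ.val) = k := by
    intro h; simp
  have h1 : ((Multiset.map f Finset.univ.val).map (fun t => X - C t)).prod
      = ((Multiset.map g Finset.univ.val).map (fun t => X - C t)).prod := by
    rw [Multiset.prod_X_sub_X_eq_sum_esymm, Multiset.prod_X_sub_X_eq_sum_esymm, hcard f, hcard g]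
    refine Finset.sum_congr rfl ?_
    intro j hj
    rw [he j (by simpa using Nat.lt_succ_iff.mp (Finset.mem_range.mp hj))]
  have := congrArg Polynomial.roots h1
  rwa [Polynomial.roots_multiset_prod_X_sub_C, Polynomial.roots_multiset_prod_X_sub_C] at this

private lemma psums_det_ms (k : ℕ) (s t : Multiset ℝ)
    (hs : Multiset.card s = k) (ht : Multiset.card t = k)
    (hp : ∀ m : ℕ, 1 ≤ m → m ≤ k → (s.map (· ^ m)).sum = (t.map (· ^ m)).sum) : s = t := by
  obtain ⟨f, hf⟩ := exists_fn k s hs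
  obtain ⟨g, hg⟩ := exists_fn k t ht
  rw [← hf, ← hg]
  refine psums_det k f g ?_
  intro m h1 h2
  have hf' : (s.map (· ^ m)).sum = ∑ i, f i ^ m := by
    rw [← hf, Multiset.map_map]; rfl
  have hg' : (t.map (· ^ m)).sum = ∑ i, g i ^ m := by
    rw [← hg, Multiset.map_map]; rfl
  rw [← hf', ← hg', hp m h1 h2]

theorem power_sums_determine_multiset (n : ℕ) (hn : 1 ≤ n)
    (x d : Fin n → ℝ) (hx : ∀ i, 0 ≤ x i) (hdnn : ∀ i, 0 ≤ d i)
    (h0 : x ⟨0, hn⟩ = d ⟨0, hn⟩)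
    (hpow : ∀ m : ℕ, 1 ≤ m → m ≤ n - 1 →
      ∑ i : Fin n, (x i) ^ (2 * m) = ∑ i : Fin n, (d i) ^ (2 * m)) :
    Multiset.map x Finset.univ.val = Multiset.map d Finset.univ.val := by
  classical
  set i0 : Fin n := ⟨0, hn⟩ with hi0
  -- the squared multisets with i0 removed
  set u : Multiset (Fin n) := (Finset.univ.erase i0).val with hu
  have hcons : Finset.univ.val = i0 ::ₘ u := by
    rw [hu, Finset.erase_val, (Multiset.cons_erase (Finset.mem_univ i0 : i0 ∈ Finset.univ.val))]
  have hcardu : Multiset.card u = n - 1 := by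
    rw [hu, Finset.erase_val]
    rw [Multiset.card_erase_of_mem (Finset.mem_univ i0)]
    simp
  have hsum_split : ∀ (h : Fin n → ℝ) (m : ℕ),
      ((u.map (fun i => h i ^ 2)).map (· ^ m)).sum = (∑ i, h i ^ (2 * m)) - h i0 ^ (2 * m) := by
    intro h m
    have : ∑ i, h i ^ (2 * m) = h i0 ^ (2 * m) + ((u.map (fun i => h i ^ 2)).map (· ^ m)).sum := by
      show (Finset.univ.val.map (fun i => h i ^ (2 * m))).sum = _
      rw [hcons, Multiset.map_cons, Multiset.sum_cons, Multiset.map_map]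
      congr 1
      refine congrArg _ (Multiset.map_congr rfl fun i _ => ?_)
      simp [pow_mul]
    rw [this]; ring
  have hsq : (u.map (fun i => x i ^ 2)) = (u.map (fun i => d i ^ 2)) := by
    refine psums_det_ms (n - 1) _ _ (by simp [hcardu]) (by simp [hcardu]) ?_
    intro m h1 h2
    rw [hsum_split x m, hsum_split d m, hpow m h1 h2, h0]
  have hfull : Multiset.map (fun i => x i ^ 2) Finset.univ.val
      = Multiset.map (fun i => d i ^ 2) Finset.univ.val := by
    rw [hcons, Multiset.map_cons, Multiset.map_cons, hsq, h0]
  have hx' : Multiset.map x Finset.univ.val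
      = (Multiset.map (fun i => x i ^ 2) Finset.univ.val).map Real.sqrt := by
    rw [Multiset.map_map]
    exact (Multiset.map_congr rfl fun i _ => (Real.sqrt_sq (hx i)).symm)
  have hd' : Multiset.map d Finset.univ.val
      = (Multiset.map (fun i => d i ^ 2) Finset.univ.val).map Real.sqrt := by
    rw [Multiset.map_map]
    exact (Multiset.map_congr rfl fun i _ => (Real.sqrt_sq (hdnn i)).symm)
  rw [hx', hd', hfull]
end
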